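/- Let d > 2 be an integer and suppose the d-th cyclotomic polynomial Φ_d is reducible over K, with factorisation Φ_d = P'·P'' into monic irreducible polynomials over K. Then complex conjugation interchanges the two factors' root sets: a complex number λ is a root of P' if and only if its complex conjugate λ̄ is a root of P''. -/

import Mathlib

/-!
Complex conjugation sends `δ` to `-δ`, so it restricts to an automorphism `σ` of `K = ℚ(δ)`
whose fixed field is `ℚ`. As `Φ_d` has rational coefficients, `σ P₁ * σ P₂ = P₁ * P₂`, so `σ P₁`
is `P₁` or `P₂`. If `σ P₁ = P₁`, then `P₁` has rational coefficients and divides `Φ_d` over `ℚ`,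
where `Φ_d` is irreducible; so `P₁ = Φ_d`, contradicting the reducibility of `Φ_d` over `K`.
Hence `σ P₁ = P₂`, and `P₂(conj z) = conj (P₁(z))`.
-/

open Polynomial IntermediateField ComplexConjugate

theorem Complex.conj_eq_neg_of_sq_eq_neg {δ : ℂ} {r : ℝ} (hr : r < 0) (hδ : δ ^ 2 = r) :
    conj δ = -δ := by
  have hre := congrArg Complex.re hδ
  have him := congrArg Complex.im hδ
  simp only [pow_two, Complex.mul_re, Complex.mul_im, Complex.ofReal_re,
    Complex.ofReal_im] at hre him
  have him_ne : δ.im ≠ 0 := by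
    intro h
    rw [h] at hre
    nlinarith [sq_nonneg δ.re]
  have h0 : δ.re = 0 := (mul_eq_zero.mp (by linarith : δ.re * δ.im = 0)).resolve_right him_ne
  apply Complex.ext <;> simp [h0]

theorem IntermediateField.adjoin_simple_neg {F E : Type*} [Field F] [Field E] [Algebra F E]
    (α : E) : F⟮-α⟯ = F⟮α⟯ := by
  refine le_antisymm ?_ ?_ <;> rw [adjoin_simple_le_iff]
  · exact neg_mem (mem_adjoin_simple_self F α)
  · simpa using neg_mem (mem_adjoin_simple_self F (-α))

theorem IntermediateField.map_adjoin_simple_of_map_eq_neg {F E : Type*} [Field F] [Field E]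
    [Algebra F E] {α : E} (f : E →ₐ[F] E) (hf : f α = -α) : F⟮α⟯.map f = F⟮α⟯ := by
  rw [adjoin_map, Set.image_singleton, hf, adjoin_simple_neg]

theorem IntermediateField.exists_eq_add_mul_of_mem_adjoin_of_sq_eq {F E : Type*} [Field F]
    [Field E] [Algebra F E] {α : E} {q : F} (hα : α ^ 2 = algebraMap F E q) {x : E}
    (hx : x ∈ F⟮α⟯) : ∃ a b : F, x = algebraMap F E a + algebraMap F E b * α := by
  set g : F[X] := X ^ 2 - C q
  have hg_monic : g.Monic := monic_X_pow_sub_C q two_ne_zero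
  have hg : aeval α g = 0 := by simp [g, hα]
  rw [← mem_toSubalgebra, adjoin_simple_toSubalgebra_of_isAlgebraic ⟨g, hg_monic.ne_zero, hg⟩,
    Algebra.adjoin_singleton_eq_range_aeval] at hx
  obtain ⟨p, rfl⟩ := hx
  have hdeg : (p %ₘ g).natDegree ≤ 1 := by
    have hg_deg : g.natDegree = 2 := natDegree_X_pow_sub_C
    have := natDegree_modByMonic_lt p hg_monic fun h ↦ by simp [h] at hg_deg
    omega
  obtain ⟨b, a, hab⟩ := exists_eq_X_add_C_of_natDegree_le_one hdeg
  refine ⟨a, b, ?_⟩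
  rw [AlgHom.toRingHom_eq_coe, RingHom.coe_coe, ← aeval_modByMonic_eq_self_of_root hg, hab]
  simp [add_comm]

theorem IntermediateField.mem_range_algebraMap_of_map_eq_self {F E : Type*} [Field F] [Field E]
    [Algebra F E] [NeZero (2 : E)] {α : E} {q : F} (hα : α ^ 2 = algebraMap F E q) (hα0 : α ≠ 0)
    {f : E →ₐ[F] E} (hf : f α = -α) {x : F⟮α⟯} (hfx : f x = x) :
    x ∈ Set.range (algebraMap F F⟮α⟯) := by
  obtain ⟨a, b, hx⟩ := exists_eq_add_mul_of_mem_adjoin_of_sq_eq hα x.2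
  have hb : b = 0 := by
    simp only [hx, map_add, map_mul, AlgHom.commutes, hf] at hfx
    have : (2 : E) * (algebraMap F E b * α) = 0 := by linear_combination -hfx
    simpa [hα0, two_ne_zero] using this
  exact ⟨a, Subtype.ext (by simp [hx, hb])⟩

namespace IntermediateField

variable {F E : Type*} [Field F] [Field E] [Algebra F E]

noncomputable def restrictOfMapEq (K : IntermediateField F E) (f : E →ₐ[F] E) (h : K.map f = K) :
    K ≃ₐ[F] K :=
  (K.equivMap f).trans (equivOfEq h)

theorem aeval_map_restrictOfMapEq (K : IntermediateField F E) (f : E →ₐ[F] E) (h : K.map f = K)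
    (P : K[X]) (z : E) :
    aeval (f z) (P.map (K.restrictOfMapEq f h : K →+* K)) = f (aeval z P) := by
  rw [aeval_def, aeval_def, eval₂_map, ← AlgHom.coe_toRingHom, hom_eval₂]
  rfl

end IntermediateField

namespace Polynomial

theorem mem_lifts_of_map_eq_self {R K : Type*} [Semiring R] [Semiring K] {f : R →+* K}
    {σ : K →+* K} (hσ : ∀ x, σ x = x → x ∈ Set.range f) {P : K[X]} (hP : P.map σ = P) :
    P ∈ lifts f :=
  (lifts_iff_coeff_lifts P).mpr fun n ↦ hσ _ (by rw [← coeff_map, hP])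

theorem eq_cyclotomic_of_dvd_of_mem_lifts {K : Type*} [Field K] [Algebra ℚ K] {n : ℕ} (hn : 0 < n)
    {P : K[X]} (hP : P.Monic) (hPu : ¬IsUnit P) (hlift : P ∈ lifts (algebraMap ℚ K))
    (hdvd : P ∣ cyclotomic n K) : P = cyclotomic n K := by
  obtain ⟨Q, rfl, -, hQ⟩ := lifts_and_degree_eq_and_monic hlift hP
  have hQdvd : Q ∣ cyclotomic n ℚ := by
    rwa [← map_dvd_map (algebraMap ℚ K) (algebraMap ℚ K).injective hQ, map_cyclotomic]
  rcases (cyclotomic.irreducible_rat hn).dvd_iff.mp hQdvd with hu | hassoc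
  · exact absurd (hu.map (mapRingHom (algebraMap ℚ K))) hPu
  · rw [eq_of_monic_of_associated hQ (cyclotomic.monic n ℚ) hassoc.symm, map_cyclotomic]

theorem eq_of_dvd_mul_of_ne {K : Type*} [Field K] {A C E : K[X]} (hA : Irreducible A)
    (hC : Irreducible C) (hE : Irreducible E) (hAm : A.Monic) (hCm : C.Monic) (hEm : E.Monic)
    (h : A ∣ C * E) (hne : A ≠ C) : A = E := by
  rcases hA.prime.dvd_or_dvd h with hAC | hAE
  · exact absurd (eq_of_monic_of_associated hAm hCm (hA.associated_of_dvd hC hAC)) hne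
  · exact eq_of_monic_of_associated hAm hEm (hA.associated_of_dvd hE hAE)

theorem map_eq_of_cyclotomic_eq_mul {K : Type*} [Field K] [Algebra ℚ K] (σ : K ≃ₐ[ℚ] K)
    (hσ : ∀ x, σ x = x → x ∈ Set.range (algebraMap ℚ K)) {n : ℕ} (hn : 0 < n)
    (hred : ¬Irreducible (cyclotomic n K)) {P₁ P₂ : K[X]} (hP₁m : P₁.Monic) (hP₂m : P₂.Monic)
    (hP₁i : Irreducible P₁) (hP₂i : Irreducible P₂) (h : cyclotomic n K = P₁ * P₂) :
    P₁.map (σ : K →+* K) = P₂ := by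
  have hσP₁i : Irreducible (P₁.map (σ : K →+* K)) :=
    (MulEquiv.irreducible_iff (mapEquiv σ.toRingEquiv).toMulEquiv).mpr hP₁i
  have hne : P₁.map (σ : K →+* K) ≠ P₁ := fun hfix ↦ hred <|
    eq_cyclotomic_of_dvd_of_mem_lifts hn hP₁m hP₁i.not_isUnit (mem_lifts_of_map_eq_self hσ hfix)
      (h ▸ dvd_mul_right _ _) ▸ hP₁i
  refine eq_of_dvd_mul_of_ne hσP₁i hP₁i hP₂i (hP₁m.map _) hP₁m hP₂m ?_ hne
  rw [← h, ← map_cyclotomic n (σ : K →+* K), h, Polynomial.map_mul]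
  exact dvd_mul_right _ _

end Polynomial

theorem stmt11
    (D : ℤ) (hD : D < 0)
    (δ : ℂ) (hδ : δ ^ 2 = (D : ℂ))
    (K : IntermediateField ℚ ℂ) (hK : K = IntermediateField.adjoin ℚ {δ})
    (d : ℕ) (hd : 2 < d)
    (hred : ¬ Irreducible (Polynomial.cyclotomic d K))
    (P₁ P₂ : Polynomial K)
    (hP₁m : P₁.Monic) (hP₂m : P₂.Monic)
    (hP₁i : Irreducible P₁) (hP₂i : Irreducible P₂)
    (hfact : Polynomial.cyclotomic d K = P₁ * P₂) :
    ∀ z : ℂ, Polynomial.aeval z P₁ = 0 ↔ Polynomial.aeval ((starRingEnd ℂ) z) P₂ = 0 := by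
  subst hK
  have hconj : conj δ = -δ :=
    Complex.conj_eq_neg_of_sq_eq_neg (r := D) (by exact_mod_cast hD) (by simpa using hδ)
  have hδ0 : δ ≠ 0 := by rintro rfl; simp at hδ; exact hD.ne (by exact_mod_cast hδ.symm)
  have hmap := map_adjoin_simple_of_map_eq_neg (F := ℚ) (conj : ℂ →+* ℂ).toRatAlgHom hconj
  let σ := ℚ⟮δ⟯.restrictOfMapEq _ hmap
  have hq : δ ^ 2 = algebraMap ℚ ℂ D := by simpa using hδ
  have hfix : ∀ x, σ x = x → x ∈ Set.range (algebraMap ℚ ℚ⟮δ⟯) := fun _ hx ↦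
    mem_range_algebraMap_of_map_eq_self (f := (conj : ℂ →+* ℂ).toRatAlgHom) hq hδ0 hconj
      (congrArg Subtype.val hx)
  have hσ : P₁.map (σ : ℚ⟮δ⟯ →+* ℚ⟮δ⟯) = P₂ :=
    map_eq_of_cyclotomic_eq_mul σ hfix (by omega) hred hP₁m hP₂m hP₁i hP₂i hfact
  intro z
  have heval : aeval (conj z) (P₁.map (σ : ℚ⟮δ⟯ →+* ℚ⟮δ⟯)) = conj (aeval z P₁) :=
    aeval_map_restrictOfMapEq _ _ hmap P₁ z
  rw [← hσ, heval, map_eq_zero_iff (conj : ℂ →+* ℂ) (RingHom.injective _)]
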